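/- The direct application of F_MAX^EK to derivative messages (Definition 6) is not a function of the closed message: with ⌜alpha⌝ = {A,B}, m1 = {alpha.D.X}_{k_ab} and m2 = {alpha.Y}_{k_ab} two messages with variables, and the closed message m = {alpha.D.B}_{k_ab}, there exist substitutions sigma1 (with X sigma1 = B) and sigma2 (with Y sigma2 = D.B) such that m1 sigma1 = m = m2 sigma2, yet F_MAX^EK(alpha, ∂[ᾱ]m1 sigma1) = {A,B,D} while F_MAX^EK(alpha, ∂[ᾱ]m2 sigma2) = {A,B}, and {A,B,D} ≠ {A,B}. -/
import Mathlib


/-!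
Messages of a free algebra over atomic names `A` and variables `X`,
with pairing and encryption by an atomic key.  `eps` is the empty message.
-/
inductive Msg (A : Type) (X : Type) : Type
  | eps : Msg A X
  | atom : A → Msg A X
  | var : X → Msg A X
  | pair : Msg A X → Msg A X → Msg A X
  | enc : Msg A X → A → Msg A X

namespace Msg

variable {A X : Type}

/-- The set of atomic names occurring in a message. -/
def atoms : Msg A X → Set A
  | eps => ∅
  | atom a => {a}
  | var _ => ∅
  | pair m₁ m₂ => m₁.atoms ∪ m₂.atoms
  | enc m k => m.atoms ∪ {k}

/-- The set of variables occurring in a message. -/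
def vars : Msg A X → Set X
  | eps => ∅
  | atom _ => ∅
  | var x => {x}
  | pair m₁ m₂ => m₁.vars ∪ m₂.vars
  | enc m _ => m.vars

/-- Substitution of messages for variables. -/
def subst (σ : X → Msg A X) : Msg A X → Msg A X
  | eps => eps
  | atom a => atom a
  | var x => σ x
  | pair m₁ m₂ => pair (m₁.subst σ) (m₂.subst σ)
  | enc m k => enc (m.subst σ) k

/-- A message is closed when it has no variables. -/
def Closed (m : Msg A X) : Prop := m.vars = ∅

open Classical in
/-- The derivation `∂_S m`: variables of `S` are replaced by the empty message. -/
noncomputable def derive (S : Set X) : Msg A X → Msg A X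
  | eps => eps
  | atom a => atom a
  | var x => if x ∈ S then eps else var x
  | pair m₁ m₂ => pair (m₁.derive S) (m₂.derive S)
  | enc m k => enc (m.derive S) k

/-- `∂ m` : all variables removed. -/
noncomputable def deriveAll (m : Msg A X) : Msg A X := m.derive m.vars

/-- `∂[X̄] m` : all variables removed except `x`. -/
noncomputable def deriveBut (x : X) (m : Msg A X) : Msg A X := m.derive (m.vars \ {x})

end Msg

/-- A substitution is closed when every variable is sent to a closed message. -/
def ClosedSubst {A X : Type} (σ : X → Msg A X) : Prop := ∀ x, (σ x).Closed

/-- The atomic names of a set of messages. -/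
def atomsOf {A X : Type} (M : Set (Msg A X)) : Set A := ⋃ m ∈ M, m.atoms

/-- Dolev-Yao deduction, for the key-inverse function `inv`. -/
inductive Deduce {A X : Type} (inv : A → A) (M : Set (Msg A X)) : Msg A X → Prop
  | ax {m} : m ∈ M → Deduce inv M m
  | pair {m₁ m₂} : Deduce inv M m₁ → Deduce inv M m₂ → Deduce inv M (.pair m₁ m₂)
  | fst {m₁ m₂} : Deduce inv M (.pair m₁ m₂) → Deduce inv M m₁
  | snd {m₁ m₂} : Deduce inv M (.pair m₁ m₂) → Deduce inv M m₂
  | enc {m k} : Deduce inv M m → Deduce inv M (.atom k) → Deduce inv M (.enc m k)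
  | dec {m k} : Deduce inv M (.enc m k) → Deduce inv M (.atom (inv k)) → Deduce inv M m

/-!
The security lattice is `(2^I, ⊒ = ⊆, ⊓ = ∪, ⊔ = ∩, ⊥ = I, ⊤ = ∅)` on the set
`P` of principal identities: concretely, a security level is a `Set P`,
the order `⊒` is `⊆`, the meet `⊓` is `∪`, `⊥` is `Set.univ` and `⊤` is `∅`.
-/

section EKFunctions

variable {A X P : Type}

/-- `β` (intended to be an atom or a variable used as a constant block)
occurs in `m`. -/
def occursIn : Msg A X → Msg A X → Prop
  | .atom a, m => a ∈ m.atoms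
  | .var x, m => x ∈ m.vars
  | _, _ => False

/-- The security level `⌜β⌝` of an atom; a variable, evaluated as a constant
block whatever its content, gets the infimum `⊥ = Set.univ`. -/
def tyOf (ty : A → Set P) : Msg A X → Set P
  | .atom a => ty a
  | _ => Set.univ

/-- The set of principal identities occurring (traveling) in a message. -/
def prinsOf (pId : A → Option P) (m : Msg A X) : Set P :=
  {q | ∃ a ∈ m.atoms, pId a = some q}

open Classical in
/-- Generic external-protective-key function: `sel` selects, at the external
protective key `k` (the outermost encryption key enclosing the occurrence of
`β` with `⌜k⁻¹⌝ ⊒ ⌜β⌝`, i.e. `ty (inv k) ⊆ ⌜β⌝`), a set of principals from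
`⌜k⁻¹⌝` and the set of principal identities traveling with `β` under the same
protection by `k`.  Sub-messages joined by pairing are combined by the meet
`⊓ = ∪`; an occurrence of `β` with no protective key yields `⊥ = Set.univ`;
if `β` does not occur the value is `⊤ = ∅`. -/
noncomputable def FEKgen (ty : A → Set P) (inv : A → A) (pId : A → Option P)
    (sel : Set P → Set P → Set P) (β : Msg A X) : Msg A X → Set P
  | .eps => ∅
  | .atom a => if β = .atom a then Set.univ else ∅
  | .var x => if β = .var x then Set.univ else ∅
  | .pair m₁ m₂ => FEKgen ty inv pId sel β m₁ ∪ FEKgen ty inv pId sel β m₂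
  | .enc m k =>
      if occursIn β m then
        if ty (inv k) ⊆ tyOf ty β then sel (ty (inv k)) (prinsOf pId m)
        else FEKgen ty inv pId sel β m
      else if β = .atom k then Set.univ
      else ∅

/-- `F_MAX^EK` : at the external protective key, the union of `⌜k⁻¹⌝` (the
principals knowing `k⁻¹`) and the principal identities traveling with the atom
under the same protection. -/
noncomputable def FMAXEK (ty : A → Set P) (inv : A → A) (pId : A → Option P)
    (β : Msg A X) (m : Msg A X) : Set P :=
  FEKgen ty inv pId (fun ek n => ek ∪ n) β m

/-- `F_N^EK` : at the external protective key, the principal identities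
traveling with the atom under the same protection. -/
noncomputable def FNEK (ty : A → Set P) (inv : A → A) (pId : A → Option P)
    (β : Msg A X) (m : Msg A X) : Set P :=
  FEKgen ty inv pId (fun _ n => n) β m

/-- `F_EK^EK` : at the external protective key, `⌜k⁻¹⌝`, the principals knowing
`k⁻¹`. -/
noncomputable def FEKEK (ty : A → Set P) (inv : A → A) (pId : A → Option P)
    (β : Msg A X) (m : Msg A X) : Set P :=
  FEKgen ty inv pId (fun ek _ => ek) β m

/-- Extension to a set of messages: the meet (`⊓ = ∪`) over its elements. -/
noncomputable def FSet (F : Msg A X → Msg A X → Set P)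
    (β : Msg A X) (M : Set (Msg A X)) : Set P :=
  ⋃ m ∈ M, F β m

end EKFunctions

open Classical in
/-- Definition 6 : the value `F(α, ∂[ᾱ] m σ)` in the lattice
`(2^I, ⊒ = ⊆, ⊤ = ∅)`.  It is `F(α, ∂m)` if `α` occurs in the static part
`∂m`, and `F(X, ∂[X̄]m)` if `α` does not occur in `∂m` and `α = Xσ` for a
variable `X` of `m`; otherwise it is `⊤ = ∅`. -/
noncomputable def FDer {A X P : Type} (F : Msg A X → Set (Msg A X) → Set P)
    (α : A) (m : Msg A X) (σ : X → Msg A X) : Set P :=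
  if α ∈ m.deriveAll.atoms then F (.atom α) {m.deriveAll}
  else if h : ∃ x, x ∈ m.vars ∧ σ x = .atom α then
    F (.var h.choose) {m.deriveBut h.choose}
  else ∅

/-- The principals `A`, `B`, `D` of the example. -/
inductive Prin : Type
  | A | B | D
deriving DecidableEq

/-- The atoms of the example: the principal identities `A`, `B`, `D`, the
secret `α` and the key `k_ab` (its own inverse). -/
inductive Atom : Type
  | idA | idB | idD | alpha | kab
deriving DecidableEq

/-- The variables `X` and `Y` of the example. -/
inductive Var : Type
  | X | Y
deriving DecidableEq

/-- The typing: `⌜α⌝ = {A,B}` and `⌜k_ab⁻¹⌝ = {A,B}`; principal identities are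
public (`⊥ = Set.univ`). -/
def tyE : Atom → Set Prin
  | .alpha => {Prin.A, Prin.B}
  | .kab => {Prin.A, Prin.B}
  | _ => Set.univ

/-- The principal identities among the atoms. -/
def pIdE : Atom → Option Prin
  | .idA => some Prin.A
  | .idB => some Prin.B
  | .idD => some Prin.D
  | _ => none

/-- `m₁ = {α.D.X}_{k_ab}`. -/
def m1 : Msg Atom Var :=
  .enc (.pair (.atom .alpha) (.pair (.atom .idD) (.var .X))) .kab

/-- `m₂ = {α.Y}_{k_ab}`. -/
def m2 : Msg Atom Var :=
  .enc (.pair (.atom .alpha) (.var .Y)) .kab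

/-- The closed message `m = {α.D.B}_{k_ab}` of a valid trace. -/
def mC : Msg Atom Var :=
  .enc (.pair (.atom .alpha) (.pair (.atom .idD) (.atom .idB))) .kab

/-- `σ₁` with `Xσ₁ = B`. -/
def σ1 : Var → Msg Atom Var := fun _ => .atom .idB

/-- `σ₂` with `Yσ₂ = D.B`. -/
def σ2 : Var → Msg Atom Var := fun _ => .pair (.atom .idD) (.atom .idB)

/-- **Example (Definition 6 is not a function of the closed message).**
With `⌜α⌝ = {A,B}`, `m₁ = {α.D.X}_{k_ab}`, `m₂ = {α.Y}_{k_ab}` and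
`m = {α.D.B}_{k_ab}`, there are substitutions `σ₁` (with `Xσ₁ = B`) and `σ₂`
(with `Yσ₂ = D.B`) such that `m₁σ₁ = m = m₂σ₂`, yet
`F_MAX^EK(α, ∂[ᾱ]m₁σ₁) = {A,B,D}` while `F_MAX^EK(α, ∂[ᾱ]m₂σ₂) = {A,B}`,
and `{A,B,D} ≠ {A,B}`. -/
theorem def6_is_not_a_function :
    tyE .alpha = {Prin.A, Prin.B} ∧
    σ1 Var.X = .atom .idB ∧
    σ2 Var.Y = .pair (.atom .idD) (.atom .idB) ∧
    m1.subst σ1 = mC ∧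
    m2.subst σ2 = mC ∧
    FDer (FSet (FMAXEK tyE id pIdE)) .alpha m1 σ1 = {Prin.A, Prin.B, Prin.D} ∧
    FDer (FSet (FMAXEK tyE id pIdE)) .alpha m2 σ2 = {Prin.A, Prin.B} ∧
    ({Prin.A, Prin.B, Prin.D} : Set Prin) ≠ {Prin.A, Prin.B} := by

  have e1 : m1.deriveAll = .enc (.pair (.atom .alpha) (.pair (.atom .idD) .eps)) .kab := by
    simp [m1, Msg.deriveAll, Msg.derive, Msg.vars]
  have e2 : m2.deriveAll = .enc (.pair (.atom .alpha) .eps) .kab := by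
    simp [m2, Msg.deriveAll, Msg.derive, Msg.vars]
  have hp1 : prinsOf pIdE (Msg.pair (.atom .alpha) (.pair (.atom .idD) .eps) : Msg Atom Var)
      = {Prin.D} := by
    ext q
    constructor
    · rintro ⟨a, ha, hq⟩
      simp [Msg.atoms] at ha
      rcases ha with h | h <;> subst h <;> simp_all [pIdE]
    · rintro rfl
      exact ⟨.idD, by simp [Msg.atoms], rfl⟩
  have hp2 : prinsOf pIdE (Msg.pair (.atom .alpha) .eps : Msg Atom Var) = ∅ := by
    ext q
    simp only [Set.mem_empty_iff_false, iff_false]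
    rintro ⟨a, ha, hq⟩
    simp [Msg.atoms] at ha
    subst ha; simp [pIdE] at hq
  refine ⟨rfl, rfl, rfl, rfl, rfl, ?_, ?_, ?_⟩
  · rw [FDer, if_pos (by rw [e1]; simp [Msg.atoms])]
    rw [e1]
    simp only [FSet, Set.mem_singleton_iff, Set.iUnion_iUnion_eq_left]
    rw [FMAXEK, FEKgen]
    rw [if_pos (by simp [occursIn, Msg.atoms]),
        if_pos (by simp [tyE, tyOf]), hp1]
    ext q; simp [tyE]; tauto
  · rw [FDer, if_pos (by rw [e2]; simp [Msg.atoms])]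
    rw [e2]
    simp only [FSet, Set.mem_singleton_iff, Set.iUnion_iUnion_eq_left]
    rw [FMAXEK, FEKgen]
    rw [if_pos (by simp [occursIn, Msg.atoms]),
        if_pos (by simp [tyE, tyOf]), hp2]
    simp [tyE]
  · intro h
    have : Prin.D ∈ ({Prin.A, Prin.B} : Set Prin) := h ▸ (by simp)
    simp at this
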